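/- arXiv:1710.09395 — 3 statements merged into one kernel-verified Lean document; each statement's English description precedes it below -/
import Mathlib

section
/- For the entropy function g(N) = (N+1)ln(N+1) - N ln N, the composite function x ↦ g⁻¹(ln x) is increasing and convex on [1,∞); consequently, for any 0 ≤ λ ≤ 1 and any N_1, N_2 ≥ 0, g⁻¹(ln(λ e^{g(N_1)} + (1-λ) e^{g(N_2)})) ≤ λ N_1 + (1-λ) N_2. -/
/-!
Let `F N = exp (g N)`. On `[1, ∞)` the map `x ↦ g⁻¹ (log x)` is the inverse of the increasing map
`F : [0, ∞) → [1, ∞)`, and the inverse of an increasing concave function is increasing and convex.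
`F` is concave because `F'' = e^g (g'² + g'')` with `g' = log (N + 1) - log N` and
`g'' = -1/(N (N + 1))`, and `g'² ≤ 1/(N (N + 1))` is the case `a = N + 1`, `b = N` of
`(log a - log b)² ≤ (a - b)² / (a b)`, itself `u² ≤ 2 (cosh u - 1)` at `u = log (a / b)`.
The final inequality is convexity at the points `exp (g Nᵢ)`.
-/

open Real Set

/-- The entropy function `g(N) = (N+1) log (N+1) - N log N` (with `g 0 = 0`). -/
noncomputable def gfun (N : ℝ) : ℝ := (N + 1) * Real.log (N + 1) - N * Real.log N

lemma sq_le_two_mul_cosh_sub_one (u : ℝ) : u ^ 2 ≤ 2 * (cosh u - 1) := by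
  wlog hu : 0 ≤ u generalizing u
  · simpa using this (-u) (by linarith)
  obtain ⟨v, rfl⟩ : ∃ v, u = 2 * v := ⟨u / 2, by ring⟩
  have hv : v ≤ sinh v := self_le_sinh_iff.2 (by linarith)
  rw [cosh_two_mul, cosh_sq]
  nlinarith

lemma sq_log_sub_log_le {a b : ℝ} (ha : 0 < a) (hb : 0 < b) :
    (log a - log b) ^ 2 ≤ (a - b) ^ 2 / (a * b) := by
  have h := sq_le_two_mul_cosh_sub_one (log (a / b))
  rw [cosh_log (by positivity), log_div ha.ne' hb.ne'] at h
  convert h using 1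
  field_simp
  ring

lemma continuous_gfun : Continuous gfun :=
  (continuous_mul_log.comp (continuous_id.add continuous_const)).sub continuous_mul_log

lemma hasDerivAt_gfun {N : ℝ} (hN : 0 < N) : HasDerivAt gfun (log (N + 1) - log N) N :=
  (((hasDerivAt_mul_log (by linarith : N + 1 ≠ 0)).comp_add_const N 1).sub
    (hasDerivAt_mul_log hN.ne')).congr_deriv (by ring)

lemma hasDerivAt_log_add_one_sub_log {N : ℝ} (hN : 0 < N) :
    HasDerivAt (fun x ↦ log (x + 1) - log x) (-(N * (N + 1))⁻¹) N :=
  (((hasDerivAt_log (by linarith : N + 1 ≠ 0)).comp_add_const N 1).sub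
    (hasDerivAt_log hN.ne')).congr_deriv (by field_simp; ring)

lemma strictMonoOn_gfun : StrictMonoOn gfun (Ici 0) := by
  refine strictMonoOn_of_hasDerivWithinAt_pos (convex_Ici 0) continuous_gfun.continuousOn
    (f' := fun N ↦ log (N + 1) - log N) (fun N hN ↦ ?_) (fun N hN ↦ ?_)
  all_goals rw [interior_Ici] at hN
  · exact (hasDerivAt_gfun hN).hasDerivWithinAt
  · linarith [log_lt_log hN (lt_add_one N)]

lemma gfun_nonneg {N : ℝ} (hN : 0 ≤ N) : 0 ≤ gfun N := by
  simpa [gfun] using strictMonoOn_gfun.monotoneOn self_mem_Ici hN hN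

lemma concaveOn_exp_gfun : ConcaveOn ℝ (Ici 0) (fun N ↦ exp (gfun N)) := by
  refine concaveOn_of_hasDerivWithinAt2_nonpos (convex_Ici 0)
    (f' := fun N ↦ exp (gfun N) * (log (N + 1) - log N))
    (f'' := fun N ↦ exp (gfun N) * ((log (N + 1) - log N) ^ 2 - (N * (N + 1))⁻¹))
    (continuous_exp.comp continuous_gfun).continuousOn
    (fun N hN ↦ ?_) (fun N hN ↦ ?_) (fun N hN ↦ ?_)
  all_goals rw [interior_Ici, mem_Ioi] at hN
  · exact (hasDerivAt_gfun hN).exp.hasDerivWithinAt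
  · exact (((hasDerivAt_gfun hN).exp.mul (hasDerivAt_log_add_one_sub_log hN)).congr_deriv
      (by ring)).hasDerivWithinAt
  · have h : (log (N + 1) - log N) ^ 2 ≤ (N * (N + 1))⁻¹ := by
      simpa [mul_comm] using sq_log_sub_log_le (by linarith : 0 < N + 1) hN
    exact mul_nonpos_of_nonneg_of_nonpos (exp_pos _).le (sub_nonpos.2 h)

theorem ConcaveOn.convexOn_of_rightInvOn {𝕜 E β : Type*} [Semiring 𝕜] [PartialOrder 𝕜]
    [AddCommMonoid E] [LinearOrder E] [AddCommMonoid β] [PartialOrder β] [SMul 𝕜 E] [SMul 𝕜 β]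
    {s : Set E} {t : Set β} {f : E → β} {g : β → E} (hf : ConcaveOn 𝕜 s f)
    (hf_mono : StrictMonoOn f s) (ht : Convex 𝕜 t) (hg : MapsTo g t s) (hgf : RightInvOn g f t) :
    ConvexOn 𝕜 t g := by
  refine ⟨ht, fun x hx y hy a b ha hb hab ↦ ?_⟩
  have hxy := ht hx hy ha hb hab
  rw [← hf_mono.le_iff_le (hg hxy) (hf.1 (hg hx) (hg hy) ha hb hab), hgf.eq hxy]
  simpa only [hgf.eq hx, hgf.eq hy] using hf.2 (hg hx) (hg hy) ha hb hab

theorem ginv_log_convex_and_epni_stronger_general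
    (ginv : ℝ → ℝ)
    (hginv_right : ∀ S : ℝ, 0 ≤ S → 0 ≤ ginv S ∧ gfun (ginv S) = S) :
    MonotoneOn (fun x : ℝ => ginv (Real.log x)) (Set.Ici 1) ∧
    ConvexOn ℝ (Set.Ici 1) (fun x : ℝ => ginv (Real.log x)) ∧
    ∀ lam : ℝ, 0 ≤ lam → lam ≤ 1 → ∀ N₁ N₂ : ℝ, 0 ≤ N₁ → 0 ≤ N₂ →
      ginv (Real.log (lam * Real.exp (gfun N₁) + (1 - lam) * Real.exp (gfun N₂)))
        ≤ lam * N₁ + (1 - lam) * N₂ := by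
  have hexp_mono : StrictMonoOn (fun N ↦ exp (gfun N)) (Ici 0) :=
    exp_strictMono.comp_strictMonoOn strictMonoOn_gfun
  have hmaps : MapsTo (fun x ↦ ginv (log x)) (Ici 1) (Ici 0) :=
    fun x hx ↦ (hginv_right _ (log_nonneg hx)).1
  have hright : RightInvOn (fun x ↦ ginv (log x)) (fun N ↦ exp (gfun N)) (Ici 1) := fun x hx ↦ by
    simp only [(hginv_right _ (log_nonneg hx)).2, exp_log (zero_lt_one.trans_le hx)]
  have hexp_maps : MapsTo (fun N ↦ exp (gfun N)) (Ici 0) (Ici 1) :=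
    fun N hN ↦ one_le_exp (gfun_nonneg hN)
  have hleft := hexp_mono.injOn.rightInvOn_of_leftInvOn hright hexp_maps hmaps
  have hconv := concaveOn_exp_gfun.convexOn_of_rightInvOn hexp_mono (convex_Ici 1) hmaps hright
  refine ⟨Function.monotoneOn_of_rightInvOn_of_mapsTo hexp_mono.monotoneOn hright hmaps, hconv,
    ?_⟩
  intro lam hlam₀ hlam₁ N₁ N₂ hN₁ hN₂
  have h := hconv.2 (hexp_maps hN₁) (hexp_maps hN₂) hlam₀ (sub_nonneg.2 hlam₁)
    (add_sub_cancel lam 1)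
  simpa only [hleft.eq hN₁, hleft.eq hN₂, smul_eq_mul] using h

/-- The function `x ↦ g⁻¹(log x)` is increasing and convex on `[1,∞)`; consequently, for any
`0 ≤ λ ≤ 1` and `N₁, N₂ ≥ 0`,
`g⁻¹(log (λ e^{g N₁} + (1-λ) e^{g N₂})) ≤ λ N₁ + (1-λ) N₂`. -/
theorem ginv_log_convex_and_epni_stronger
    (ginv : ℝ → ℝ)
    (hginv_left : ∀ N : ℝ, 0 ≤ N → ginv (gfun N) = N)
    (hginv_right : ∀ S : ℝ, 0 ≤ S → 0 ≤ ginv S ∧ gfun (ginv S) = S) :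
    MonotoneOn (fun x : ℝ => ginv (Real.log x)) (Set.Ici 1) ∧
    ConvexOn ℝ (Set.Ici 1) (fun x : ℝ => ginv (Real.log x)) ∧
    ∀ lam : ℝ, 0 ≤ lam → lam ≤ 1 → ∀ N₁ N₂ : ℝ, 0 ≤ N₁ → 0 ≤ N₂ →
      ginv (Real.log (lam * Real.exp (gfun N₁) + (1 - lam) * Real.exp (gfun N₂)))
        ≤ lam * N₁ + (1 - lam) * N₂ :=
  ginv_log_convex_and_epni_stronger_general ginv hginv_right
end

section
/- The quantum Entropy Power Inequality implies the Entropy Photon-number Inequality up to a small violation: for any λ ∈ [0,1] and S_1, S_2 ≥ 0, setting N_i = g⁻¹(S_i) and N_Y = g⁻¹(ln(λ e^{S_1} + (1-λ) e^{S_2})), one has N_Y ≥ λ N_1 + (1-λ) N_2 - (1/2 - 1/e). -/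
open Real Set intervalIntegral

theorem integral_log_le_mul_log_midpoint {a b : ℝ} (ha : 0 ≤ a) (hab : a ≤ b) :
    ∫ x in a..b, log x ≤ (b - a) * log ((a + b) / 2) := by
  set m := (a + b) / 2
  have tangent : ∀ x ∈ Ioo a b, log x ≤ log m + (x - m) / m := by
    intro x hx
    have hx0 : 0 < x := ha.trans_lt hx.1
    have hm0 : 0 < m := by simp only [m]; linarith [hx.1, hx.2]
    have := log_le_sub_one_of_pos (div_pos hx0 hm0)
    rw [log_div hx0.ne' hm0.ne'] at this
    rw [sub_div, div_self hm0.ne']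
    linarith
  calc ∫ x in a..b, log x ≤ ∫ x in a..b, (log m + (x - m) / m) :=
        integral_mono_on_of_le_Ioo hab intervalIntegrable_log'
          (Continuous.intervalIntegrable (by fun_prop) a b) tangent
    _ = (b - a) * log m := by
        rw [integral_add intervalIntegrable_const (Continuous.intervalIntegrable (by fun_prop) a b),
          integral_div, integral_sub intervalIntegrable_id intervalIntegrable_const]
        simp only [integral_const, integral_id, smul_eq_mul, m]
        ring

theorem gfun_eq_one_add_integral_log (N : ℝ) :
    gfun N = 1 + ∫ x in N..N + 1, log x := by
  rw [integral_log, gfun]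
  ring

theorem gfun_le_one_add_log {N : ℝ} (hN : 0 ≤ N) : gfun N ≤ 1 + log (N + 1 / 2) := by
  have := integral_log_le_mul_log_midpoint hN (by linarith : N ≤ N + 1)
  rw [gfun_eq_one_add_integral_log]
  rw [show (N + (N + 1)) / 2 = N + 1 / 2 by ring, add_sub_cancel_left, one_mul] at this
  linarith

theorem exp_gfun_le {N : ℝ} (hN : 0 ≤ N) : exp (gfun N) ≤ exp 1 * (N + 1 / 2) := by
  calc exp (gfun N) ≤ exp (1 + log (N + 1 / 2)) := exp_le_exp.2 (gfun_le_one_add_log hN)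
    _ = exp 1 * (N + 1 / 2) := by rw [exp_add, exp_log (by linarith)]

theorem two_div_le_log_one_add_inv {a : ℝ} (ha : 0 < a) : 2 / (2 * a + 1) ≤ log (1 + a⁻¹) := by
  simpa [div_eq_mul_inv] using le_hasSum (hasSum_log_one_add_inv ha) 0 (fun k _ => by positivity)

theorem log_add_one_add_two_mul_div_le_gfun {N : ℝ} (hN : 0 ≤ N) :
    log (N + 1) + 2 * N / (2 * N + 1) ≤ gfun N := by
  rcases hN.eq_or_lt with rfl | hN
  · simp [gfun]
  have hg : gfun N = log (N + 1) + N * log (1 + N⁻¹) := by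
    rw [gfun, show 1 + N⁻¹ = (N + 1) / N by field_simp, log_div (by linarith) hN.ne']
    ring
  have h := mul_le_mul_of_nonneg_left (two_div_le_log_one_add_inv hN) hN.le
  rw [mul_div_assoc', mul_comm N 2] at h
  rw [hg]
  linarith

theorem concaveOn_one_add_mul_exp_neg : ConcaveOn ℝ (Icc 0 1) (fun t => (1 + t) * exp (-t)) := by
  have hf' (t : ℝ) : HasDerivAt (fun t => (1 + t) * exp (-t)) (-t * exp (-t)) t :=
    (((hasDerivAt_id' t).const_add 1).mul (hasDerivAt_neg t).exp).congr_deriv (by ring)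
  have hf'' (t : ℝ) : HasDerivAt (fun t => -t * exp (-t)) ((t - 1) * exp (-t)) t :=
    ((hasDerivAt_neg t).mul (hasDerivAt_neg t).exp).congr_deriv (by ring)
  refine concaveOn_of_hasDerivWithinAt2_nonpos (convex_Icc 0 1) (by fun_prop)
    (fun t _ => (hf' t).hasDerivWithinAt) (fun t _ => (hf'' t).hasDerivWithinAt) ?_
  intro t ht
  rw [interior_Icc] at ht
  exact mul_nonpos_of_nonpos_of_nonneg (by linarith [ht.2]) (exp_pos _).le

theorem exp_one_mul_add_one_le_exp_gfun {N : ℝ} (hN : 0 ≤ N) :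
    exp 1 * N + 1 ≤ exp (gfun N) := by
  obtain ⟨t, ht_def⟩ : ∃ t : ℝ, t = 1 / (2 * N + 1) := ⟨_, rfl⟩
  have ht : t ∈ Icc (0 : ℝ) 1 := by
    rw [ht_def]; exact ⟨by positivity, by rw [div_le_one (by positivity)]; linarith⟩
  have htN : t * (2 * N + 1) = 1 := by rw [ht_def]; field_simp
  have chord := concaveOn_one_add_mul_exp_neg.2 (left_mem_Icc.2 zero_le_one)
    (right_mem_Icc.2 zero_le_one) (sub_nonneg.2 ht.2) ht.1 (sub_add_cancel 1 t)
  norm_num at chord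
  have hee : exp 1 * exp (-1) = 1 := by rw [← exp_add]; norm_num
  calc exp 1 * N + 1 = exp 1 * (2 * N + 1) / 2 * (1 - t + t * (2 * exp (-1))) := by
        linear_combination (exp 1 / 2 - 1) * htN - (2 * N + 1) * t * hee
    _ ≤ exp 1 * (2 * N + 1) / 2 * ((1 + t) * exp (-t)) := by gcongr
    _ = exp (log (N + 1) + 2 * N / (2 * N + 1)) := by
        rw [exp_add, exp_log (by linarith), show 2 * N / (2 * N + 1) = 1 + -t by
          rw [ht_def]; field_simp; ring, exp_add]
        linear_combination (exp 1 * exp (-t) / 2) * htN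
    _ ≤ exp (gfun N) := exp_le_exp.2 (log_add_one_add_two_mul_div_le_gfun hN)

theorem epni_violation_bound_general
    (ginv : ℝ → ℝ)
    (hginv_right : ∀ S : ℝ, 0 ≤ S → 0 ≤ ginv S ∧ gfun (ginv S) = S) :
    ∀ lam : ℝ, 0 ≤ lam → lam ≤ 1 → ∀ S₁ S₂ : ℝ, 0 ≤ S₁ → 0 ≤ S₂ →
      lam * ginv S₁ + (1 - lam) * ginv S₂ - (1 / 2 - 1 / Real.exp 1)
        ≤ ginv (Real.log (lam * Real.exp S₁ + (1 - lam) * Real.exp S₂)) := by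
  intro lam hlam₀ hlam₁ S₁ S₂ hS₁ hS₂
  obtain ⟨hN₁, hg₁⟩ := hginv_right S₁ hS₁
  obtain ⟨hN₂, hg₂⟩ := hginv_right S₂ hS₂
  set A := lam * exp S₁ + (1 - lam) * exp S₂
  set N := lam * ginv S₁ + (1 - lam) * ginv S₂
  have hN : 0 ≤ N := add_nonneg (mul_nonneg hlam₀ hN₁) (mul_nonneg (sub_nonneg.2 hlam₁) hN₂)
  have hA_lower : exp 1 * N + 1 ≤ A := by
    have h₁ := exp_one_mul_add_one_le_exp_gfun hN₁
    have h₂ := exp_one_mul_add_one_le_exp_gfun hN₂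
    rw [hg₁] at h₁
    rw [hg₂] at h₂
    linarith [mul_le_mul_of_nonneg_left h₁ hlam₀, mul_le_mul_of_nonneg_left h₂ (sub_nonneg.2 hlam₁)]
  have hA_one : 1 ≤ A := by linarith [mul_nonneg (exp_pos 1).le hN]
  obtain ⟨hNY, hgY⟩ := hginv_right (log A) (log_nonneg hA_one)
  have hA_upper := exp_gfun_le hNY
  rw [hgY, exp_log (by linarith)] at hA_upper
  have key : exp 1 * (N + 1 / exp 1) ≤ exp 1 * (ginv (log A) + 1 / 2) := by
    rw [mul_add, mul_one_div_cancel (exp_pos 1).ne']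
    linarith
  linarith [le_of_mul_le_mul_left key (exp_pos 1)]

/-- The quantum Entropy Power Inequality implies the Entropy Photon-number Inequality up to a
small violation: for `λ ∈ [0,1]` and `S₁, S₂ ≥ 0`, with `N_i = g⁻¹(S_i)` and
`N_Y = g⁻¹(log (λ e^{S₁} + (1-λ) e^{S₂}))`, one has
`N_Y ≥ λ N₁ + (1-λ) N₂ - (1/2 - 1/e)`. -/
theorem epni_violation_bound
    (ginv : ℝ → ℝ)
    (hginv_left : ∀ N : ℝ, 0 ≤ N → ginv (gfun N) = N)
    (hginv_right : ∀ S : ℝ, 0 ≤ S → 0 ≤ ginv S ∧ gfun (ginv S) = S) :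
    ∀ lam : ℝ, 0 ≤ lam → lam ≤ 1 → ∀ S₁ S₂ : ℝ, 0 ≤ S₁ → 0 ≤ S₂ →
      lam * ginv S₁ + (1 - lam) * ginv S₂ - (1 / 2 - 1 / Real.exp 1)
        ≤ ginv (Real.log (lam * Real.exp S₁ + (1 - lam) * Real.exp S₂)) :=
  epni_violation_bound_general ginv hginv_right
end

section
/- Any α satisfying the Gaussian-to-Gaussian positivity condition is positive semidefinite: if K and α are real 2n×2n matrices with α symmetric such that K σ Kᵀ + α ≥ ±iΔ for every real symmetric σ with σ ≥ ±iΔ, then α ≥ 0. -/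
open scoped ComplexOrder

/-- The standard symplectic form `Δ = ⊕ₖ [[0,1],[-1,0]]` on `ℝ^{2n}`. -/
noncomputable def sympForm (n : ℕ) : Matrix (Fin (2 * n)) (Fin (2 * n)) ℝ :=
  Matrix.of fun i j =>
    if (i : ℕ) % 2 = 0 ∧ (j : ℕ) = (i : ℕ) + 1 then 1
    else if (j : ℕ) % 2 = 0 ∧ (i : ℕ) = (j : ℕ) + 1 then -1
    else 0

/-!
For real `k` the term `kᵀ (iΔ) k` vanishes, so the hypothesis gives `kᵀ α k ≥ -uᵀ σ u` with
`u = Kᵀ k` for every admissible `σ`; it remains to make `uᵀ σ u` arbitrarily small.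
If `S Δ Sᵀ = Δ`, then `σ = S Sᵀ` is admissible: `S Sᵀ + iΔ = S (1 + iΔ) Sᵀ`, and
`1 + iΔ = ½ (1 + iΔ)ᴴ (1 + iΔ)` because `Δ² = -1`. Such an `S` squeezing `u` by a factor `t`
exists: it acts as `t` on `u`, as `t⁻¹` on `Δ u ⊥ u`, and as the identity on their orthogonal
complement, so `uᵀ (S Sᵀ) u = t² |u|² → 0`.
-/

open Matrix Complex

theorem sympForm_transpose (n : ℕ) : (sympForm n)ᵀ = -sympForm n := by
  ext i j
  simp only [sympForm, transpose_apply, Matrix.neg_apply, of_apply]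
  split_ifs <;> first | (exfalso; omega) | norm_num

theorem sympForm_mul_self (n : ℕ) : sympForm n * sympForm n = -1 := by
  ext i j
  rw [mul_apply, Finset.sum_eq_single
    ⟨if (i : ℕ) % 2 = 0 then i + 1 else i - 1, by split_ifs <;> omega⟩]
  · simp only [sympForm, of_apply, Matrix.neg_apply, Matrix.one_apply, Fin.ext_iff]
    split_ifs <;> first | (exfalso; omega) | norm_num
  · intro k _ hk
    simp only [sympForm, of_apply, ne_eq, Fin.ext_iff] at hk ⊢
    split_ifs at hk ⊢ <;> first | (exfalso; omega) | norm_num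
  · simp

theorem nonneg_of_forall_sq_mul_add_nonneg {c q : ℝ} (h : ∀ t > 0, 0 ≤ t ^ 2 * c + q) :
    0 ≤ q := by
  have hcont : Continuous fun t : ℝ => t ^ 2 * c + q := by fun_prop
  have hlim : Filter.Tendsto (fun t : ℝ => t ^ 2 * c + q) (nhdsWithin 0 (Set.Ioi 0)) (nhds q) := by
    simpa using (hcont.tendsto 0).mono_left nhdsWithin_le_nhds
  exact ge_of_tendsto hlim (eventually_nhdsWithin_of_forall h)

section

variable {ι : Type*} [Fintype ι] {J : Matrix ι ι ℝ}

theorem dotProduct_mulVec_eq_neg_of_transpose_eq_neg (hJ : Jᵀ = -J) (v w : ι → ℝ) :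
    v ⬝ᵥ J *ᵥ w = -(J *ᵥ v ⬝ᵥ w) := by
  rw [dotProduct_mulVec, ← mulVec_transpose, hJ, neg_mulVec, neg_dotProduct]

theorem dotProduct_mulVec_self_eq_zero_of_transpose_eq_neg (hJ : Jᵀ = -J) (v : ι → ℝ) :
    v ⬝ᵥ J *ᵥ v = 0 := by
  have h := dotProduct_mulVec_eq_neg_of_transpose_eq_neg hJ v v
  rw [dotProduct_comm (J *ᵥ v)] at h
  linarith

theorem map_ofReal_mul (A B : Matrix ι ι ℝ) :
    (A * B).map ofReal = A.map ofReal * B.map ofReal :=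
  Matrix.map_mul (f := ofRealHom)

omit [Fintype ι] in
theorem conjTranspose_map_ofReal (A : Matrix ι ι ℝ) : (A.map ofReal)ᴴ = Aᵀ.map ofReal := by
  rw [← conjTranspose_map _ fun _ => (conj_ofReal _).symm, conjTranspose_eq_transpose_of_trivial]

theorem star_dotProduct_map_ofReal_mulVec (A : Matrix ι ι ℝ) (k : ι → ℝ) :
    star (ofReal ∘ k) ⬝ᵥ A.map ofReal *ᵥ (ofReal ∘ k) = ((k ⬝ᵥ A *ᵥ k : ℝ) : ℂ) := by
  simp [dotProduct, mulVec, Finset.mul_sum]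

theorem dotProduct_mulVec_nonneg_of_posSemidef_map_ofReal_add_I_smul (hJ : Jᵀ = -J)
    {M : Matrix ι ι ℝ} (h : (M.map ofReal + I • J.map ofReal).PosSemidef) (k : ι → ℝ) :
    0 ≤ k ⬝ᵥ M *ᵥ k := by
  have hk := h.dotProduct_mulVec_nonneg (ofReal ∘ k)
  rwa [add_mulVec, dotProduct_add, smul_mulVec, dotProduct_smul,
    star_dotProduct_map_ofReal_mulVec, star_dotProduct_map_ofReal_mulVec,
    dotProduct_mulVec_self_eq_zero_of_transpose_eq_neg hJ, ofReal_zero, smul_zero, add_zero,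
    zero_le_real] at hk

omit [Fintype ι] in
theorem posSemidef_map_ofReal_sub_I_smul (hJ : Jᵀ = -J) {σ : Matrix ι ι ℝ} (hσ : σᵀ = σ)
    (h : (σ.map ofReal + I • J.map ofReal).PosSemidef) :
    (σ.map ofReal - I • J.map ofReal).PosSemidef := by
  have h' := h.transpose
  rwa [transpose_add, transpose_smul, ← transpose_map, ← transpose_map, hσ, hJ,
    Matrix.map_neg _ ofReal_neg, smul_neg, ← sub_eq_add_neg] at h'

variable [DecidableEq ι]

theorem posSemidef_one_add_I_smul_map_ofReal (hJ : Jᵀ = -J) (hJJ : J * J = -1) :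
    (1 + I • J.map ofReal).PosSemidef := by
  set M : Matrix ι ι ℂ := 1 + I • J.map ofReal
  have hM : Mᴴ = M := by
    simp [M, conjTranspose_map_ofReal, hJ, Matrix.map_neg _ ofReal_neg]
  have hMM : Mᴴ * M = (2 : ℝ) • M := by
    have hJJc : J.map ofReal * J.map ofReal = -1 := by
      rw [← map_ofReal_mul, hJJ, Matrix.map_neg _ ofReal_neg,
        Matrix.map_one _ ofReal_zero ofReal_one]
    rw [hM]
    simp only [M, add_mul, mul_add, smul_mul_smul_comm, mul_one, one_mul, hJJc, I_mul_I]
    module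
  have hM_eq : M = (2⁻¹ : ℝ) • (Mᴴ * M) := by
    rw [hMM, smul_smul]; norm_num
  rw [hM_eq]
  exact (posSemidef_conjTranspose_mul_self M).smul (by norm_num)

theorem posSemidef_map_ofReal_mul_transpose_add_I_smul (hJ : Jᵀ = -J) (hJJ : J * J = -1)
    {S : Matrix ι ι ℝ} (hS : S * J * Sᵀ = J) :
    ((S * Sᵀ).map ofReal + I • J.map ofReal).PosSemidef := by
  have h := (posSemidef_one_add_I_smul_map_ofReal hJ hJJ).mul_mul_conjTranspose_same (S.map ofReal)
  rwa [conjTranspose_map_ofReal, mul_add, add_mul, mul_one, mul_smul_comm, smul_mul_assoc,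
    ← map_ofReal_mul, ← map_ofReal_mul, ← map_ofReal_mul, hS] at h

/-- The coefficients are junk (`x / 0 = 0`) when `u = 0`, in which case this is the identity. -/
noncomputable def symplecticSqueeze (J : Matrix ι ι ℝ) (u : ι → ℝ) (t : ℝ) : Matrix ι ι ℝ :=
  1 + ((t - 1) / (u ⬝ᵥ u)) • vecMulVec u u
    + ((t⁻¹ - 1) / (u ⬝ᵥ u)) • vecMulVec (J *ᵥ u) (J *ᵥ u)

theorem symplecticSqueeze_mulVec (u : ι → ℝ) (t : ℝ) (x : ι → ℝ) :
    symplecticSqueeze J u t *ᵥ x = x + ((t - 1) / (u ⬝ᵥ u) * (u ⬝ᵥ x)) • u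
      + ((t⁻¹ - 1) / (u ⬝ᵥ u) * (J *ᵥ u ⬝ᵥ x)) • (J *ᵥ u) := by
  simp only [symplecticSqueeze, add_mulVec, one_mulVec, smul_mulVec, vecMulVec_mulVec,
    op_smul_eq_smul, smul_smul]

theorem transpose_symplecticSqueeze (u : ι → ℝ) (t : ℝ) :
    (symplecticSqueeze J u t)ᵀ = symplecticSqueeze J u t := by
  simp [symplecticSqueeze, transpose_vecMulVec]

theorem symplecticSqueeze_mulVec_self (hJ : Jᵀ = -J) (u : ι → ℝ) (t : ℝ) :
    symplecticSqueeze J u t *ᵥ u = t • u := by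
  rw [symplecticSqueeze_mulVec, dotProduct_comm (J *ᵥ u),
    dotProduct_mulVec_self_eq_zero_of_transpose_eq_neg hJ, mul_zero, zero_smul, add_zero]
  rcases eq_or_ne (u ⬝ᵥ u) 0 with hu | hu
  · simp [dotProduct_self_eq_zero.mp hu]
  · rw [div_mul_cancel₀ _ hu]; module

theorem symplecticSqueeze_mul_mul_transpose (hJ : Jᵀ = -J) (hJJ : J * J = -1) (u : ι → ℝ)
    {t : ℝ} (ht : t ≠ 0) :
    symplecticSqueeze J u t * J * (symplecticSqueeze J u t)ᵀ = J := by
  have hJJu : J *ᵥ (J *ᵥ u) = -u := by rw [mulVec_mulVec, hJJ, neg_mulVec, one_mulVec]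
  have hJuu : J *ᵥ u ⬝ᵥ u = 0 := by
    rw [dotProduct_comm, dotProduct_mulVec_self_eq_zero_of_transpose_eq_neg hJ]
  rw [ext_iff_mulVec]
  intro x
  rw [transpose_symplecticSqueeze, ← mulVec_mulVec, ← mulVec_mulVec, symplecticSqueeze_mulVec,
    symplecticSqueeze_mulVec]
  simp only [mulVec_add, mulVec_smul, dotProduct_add, dotProduct_smul, dotProduct_neg,
    dotProduct_mulVec_eq_neg_of_transpose_eq_neg hJ, hJJu, hJuu, neg_dotProduct, smul_eq_mul]
  set c := u ⬝ᵥ u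
  set a := (t - 1) / c
  set b := (t⁻¹ - 1) / c
  have hab : a + b + a * b * c = 0 := by
    rcases eq_or_ne c 0 with hc | hc
    · simp [a, b, hc]
    · simp only [a, b]; field_simp; ring
  linear_combination (norm := module) (u ⬝ᵥ x) • hab • (J *ᵥ u) - (J *ᵥ u ⬝ᵥ x) • hab • u

theorem dotProduct_symplecticSqueeze_mul_transpose_mulVec (hJ : Jᵀ = -J) (u : ι → ℝ)
    (t : ℝ) :
    u ⬝ᵥ (symplecticSqueeze J u t * (symplecticSqueeze J u t)ᵀ) *ᵥ u = t ^ 2 * (u ⬝ᵥ u) := by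
  rw [← mulVec_mulVec, transpose_symplecticSqueeze, symplecticSqueeze_mulVec_self hJ,
    mulVec_smul, symplecticSqueeze_mulVec_self hJ, smul_smul, dotProduct_smul, smul_eq_mul, sq]

end

/-- Any `α` satisfying the Gaussian-to-Gaussian positivity condition is positive semidefinite:
if `K σ Kᵀ + α ≥ ± i Δ` for every quantum covariance matrix `σ` (real symmetric with
`σ ≥ ± i Δ`), then `α ≥ 0`. -/
theorem noise_matrix_posSemidef
    (n : ℕ) (K α : Matrix (Fin (2 * n)) (Fin (2 * n)) ℝ) (hα : α.IsSymm)
    (h : ∀ σ : Matrix (Fin (2 * n)) (Fin (2 * n)) ℝ, σ.IsSymm →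
      (σ.map (fun a => (a : ℂ)) + Complex.I • (sympForm n).map (fun a => (a : ℂ))).PosSemidef →
      (σ.map (fun a => (a : ℂ)) - Complex.I • (sympForm n).map (fun a => (a : ℂ))).PosSemidef →
      ((K * σ * K.transpose + α).map (fun a => (a : ℂ))
          + Complex.I • (sympForm n).map (fun a => (a : ℂ))).PosSemidef ∧
      ((K * σ * K.transpose + α).map (fun a => (a : ℂ))
          - Complex.I • (sympForm n).map (fun a => (a : ℂ))).PosSemidef) :
    α.PosSemidef := by
  have hΔ := sympForm_transpose n
  have hΔΔ := sympForm_mul_self n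
  refine .of_dotProduct_mulVec_nonneg (isHermitian_iff_isSymm.mpr hα) fun k => ?_
  rw [star_trivial]
  set u := Kᵀ *ᵥ k
  refine nonneg_of_forall_sq_mul_add_nonneg (c := u ⬝ᵥ u) fun t ht => ?_
  set S := symplecticSqueeze (sympForm n) u t
  have hσ : (S * Sᵀ)ᵀ = S * Sᵀ := by rw [transpose_mul, transpose_transpose]
  have hplus := posSemidef_map_ofReal_mul_transpose_add_I_smul hΔ hΔΔ
    (symplecticSqueeze_mul_mul_transpose hΔ hΔΔ u ht.ne')
  have hminus := posSemidef_map_ofReal_sub_I_smul hΔ hσ hplus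
  have hk := dotProduct_mulVec_nonneg_of_posSemidef_map_ofReal_add_I_smul hΔ
    (h _ hσ hplus hminus).1 k
  rwa [add_mulVec, dotProduct_add, ← mulVec_mulVec, ← mulVec_mulVec, dotProduct_mulVec,
    ← mulVec_transpose, dotProduct_symplecticSqueeze_mul_transpose_mulVec hΔ] at hk
end
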